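/- Let d ≥ 1 and for i = 1,…,d let φ_i : ℝ → ℝ be a function with φ_i(0) = 0 satisfying the incremental sector bound μ_i·(x−y)² ≤ (x−y)·(φ_i(x)−φ_i(y)) ≤ λ_i·(x−y)² for all x, y ∈ ℝ, where μ_i ≤ λ_i are real constants. Set μ := min_i μ_i and λ := max_i λ_i, and define the diagonal static operator Φ : L₂^d → L₂^d by (Φu)(t) := (φ₁(u₁(t)),…,φ_d(u_d(t))) (which is well defined since each φ_i is Lipschitz with φ_i(0)=0). Then SRG(Φ) ⊆ { z ∈ ℂ : |z − (λ+μ)/2| ≤ (λ−μ)/2 }. -/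

import Mathlib

open ComplexConjugate
open scoped RealInnerProductSpace Pointwise

/-- The point `(‖Δy‖/‖Δu‖)·e^{iθ}` with `θ = arccos(⟨Δu,Δy⟩/(‖Δu‖‖Δy‖)) ∈ [0,π]`
contributed to the SRG by a pair of increments `Δu`, `Δy` (equal to `0` when `Δy = 0`). -/
noncomputable def srgPoint {H : Type*} [NormedAddCommGroup H] [InnerProductSpace ℝ H]
    (du dy : H) : ℂ :=
  ((‖dy‖ / ‖du‖ : ℝ) : ℂ) *
    Complex.exp (Complex.I * ((Real.arccos (⟪du, dy⟫ / (‖du‖ * ‖dy‖)) : ℝ) : ℂ))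

/-- The Scaled Relative Graph of an operator `R` on a real Hilbert space over a set `U` of
inputs; both signs of the angle are included (via complex conjugation). -/
noncomputable def SRG {H : Type*} [NormedAddCommGroup H] [InnerProductSpace ℝ H]
    (R : H → H) (U : Set H) : Set ℂ :=
  { z | ∃ u₁ ∈ U, ∃ u₂ ∈ U, u₁ ≠ u₂ ∧
      (z = srgPoint (u₁ - u₂) (R u₁ - R u₂) ∨
        z = conj (srgPoint (u₁ - u₂) (R u₁ - R u₂))) }

/-- The Scaled Graph of an operator `R` at the particular input `us`, over a set `U` of inputs. -/
noncomputable def SG {H : Type*} [NormedAddCommGroup H] [InnerProductSpace ℝ H]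
    (R : H → H) (U : Set H) (us : H) : Set ℂ :=
  { z | ∃ u ∈ U, u ≠ us ∧
      (z = srgPoint (u - us) (R u - R us) ∨
        z = conj (srgPoint (u - us) (R u - R us))) }


open MeasureTheory

/-- `L₂^d = L²([0,∞), ℝ^d)`. -/
noncomputable abbrev L2S (d : ℕ) :=
  MeasureTheory.Lp (EuclideanSpace ℝ (Fin d)) 2 (MeasureTheory.volume.restrict (Set.Ici (0 : ℝ)))

/-! For increments `f = u₁ - u₂` and `g = Φ u₁ - Φ u₂`, the incremental sector bounds give
`(g - μ f)(λ f - g) ≥ 0` in every coordinate at almost every time, hence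
`⟪g - μ f, λ f - g⟫ ≥ 0` after integration. With `c = (λ + μ)/2` and `r = (λ - μ)/2` this
inner product equals `r² ‖f‖² - ‖g - c f‖²`, while the law of cosines shows that the SRG point
`z` of `(f, g)` satisfies `|z - c| = ‖g - c f‖ / ‖f‖`. So `z` lies in the disk, and so does `z̄`
because the centre is real. -/

section ScaledRelativeGraph

variable {H : Type*} [NormedAddCommGroup H] [InnerProductSpace ℝ H]

lemma norm_srgPoint_sub_ofReal_sq {f : H} (hf : f ≠ 0) (g : H) (c : ℝ) :
    ‖srgPoint f g - c‖ ^ 2 = ‖g - c • f‖ ^ 2 / ‖f‖ ^ 2 := by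
  set s := ⟪f, g⟫ / (‖f‖ * ‖g‖)
  have hs : |s| ≤ 1 := abs_real_inner_div_norm_mul_norm_le_one f g
  have hcos : Real.cos (Real.arccos s) = s :=
    Real.cos_arccos (neg_le_of_abs_le hs) (le_of_abs_le hs)
  have hsin : Real.sin (Real.arccos s) ^ 2 = 1 - s ^ 2 := by
    rw [Real.sin_arccos, Real.sq_sqrt (by nlinarith [sq_abs s, abs_nonneg s])]
  have hfn : ‖f‖ ≠ 0 := norm_ne_zero_iff.mpr hf
  have hrs : ‖g‖ / ‖f‖ * s * ‖f‖ ^ 2 = ⟪f, g⟫ := by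
    rcases eq_or_ne g 0 with rfl | hg
    · simp
    · simp only [s]
      field_simp [norm_ne_zero_iff.mpr hg]
  have hr : (‖g‖ / ‖f‖) ^ 2 * ‖f‖ ^ 2 = ‖g‖ ^ 2 := by field_simp
  have hpoint : srgPoint f g - c =
      ⟨‖g‖ / ‖f‖ * Real.cos (Real.arccos s) - c, ‖g‖ / ‖f‖ * Real.sin (Real.arccos s)⟩ := by
    rw [srgPoint, mul_comm Complex.I, Complex.exp_mul_I, Complex.mk_eq_add_mul_I,
      ← Complex.ofReal_cos, ← Complex.ofReal_sin]
    push_cast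
    ring
  rw [hpoint, Complex.sq_norm, Complex.normSq_mk, norm_sub_sq_real, norm_smul, inner_smul_right,
    Real.norm_eq_abs, mul_pow, sq_abs, eq_div_iff (pow_ne_zero 2 hfn), hcos]
  linear_combination
    (‖g‖ / ‖f‖) ^ 2 * ‖f‖ ^ 2 * hsin + hr - 2 * c * hrs + 2 * c * real_inner_comm f g

lemma norm_sub_midpoint_smul_sq_le {f g : H} {μ Λ : ℝ} (h : 0 ≤ ⟪g - μ • f, Λ • f - g⟫) :
    ‖g - ((Λ + μ) / 2) • f‖ ^ 2 ≤ ((Λ - μ) / 2) ^ 2 * ‖f‖ ^ 2 := by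
  set a := g - ((Λ + μ) / 2) • f
  have h₁ : g - μ • f = a + ((Λ - μ) / 2) • f := by module
  have h₂ : Λ • f - g = ((Λ - μ) / 2) • f - a := by module
  clear_value a
  rw [h₁, h₂] at h
  simp only [inner_add_left, inner_sub_right, real_inner_smul_left, real_inner_smul_right,
    real_inner_self_eq_norm_sq, real_inner_comm a f, norm_smul, Real.norm_eq_abs, mul_pow,
    sq_abs] at h
  linarith

theorem SRG_subset_closedBall {R : H → H} {U : Set H} {μ Λ : ℝ} (hμΛ : μ ≤ Λ)
    (hR : ∀ u₁ ∈ U, ∀ u₂ ∈ U,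
      0 ≤ ⟪R u₁ - R u₂ - μ • (u₁ - u₂), Λ • (u₁ - u₂) - (R u₁ - R u₂)⟫) :
    SRG R U ⊆ Metric.closedBall (((Λ + μ) / 2 : ℝ) : ℂ) ((Λ - μ) / 2) := by
  have hpoint : ∀ u₁ ∈ U, ∀ u₂ ∈ U, u₁ ≠ u₂ →
      ‖srgPoint (u₁ - u₂) (R u₁ - R u₂) - (((Λ + μ) / 2 : ℝ) : ℂ)‖ ≤ (Λ - μ) / 2 := by
    intro u₁ h₁ u₂ h₂ hne
    have hf : u₁ - u₂ ≠ 0 := sub_ne_zero.mpr hne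
    refine (pow_le_pow_iff_left₀ (norm_nonneg _) (by linarith) two_ne_zero).mp ?_
    rw [norm_srgPoint_sub_ofReal_sq hf, div_le_iff₀ (by positivity)]
    exact norm_sub_midpoint_smul_sq_le (hR u₁ h₁ u₂ h₂)
  rintro z ⟨u₁, h₁, u₂, h₂, hne, rfl | rfl⟩
  · rw [mem_closedBall_iff_norm]
    exact hpoint u₁ h₁ u₂ h₂ hne
  · rw [mem_closedBall_iff_norm, ← Complex.conj_ofReal, ← map_sub, Complex.norm_conj]
    exact hpoint u₁ h₁ u₂ h₂ hne

end ScaledRelativeGraph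

lemma sector_mul_nonneg {ψ : ℝ → ℝ} {m l μ Λ : ℝ} (hμ : μ ≤ m) (hΛ : l ≤ Λ)
    (hψ : ∀ x y : ℝ,
      m * (x - y) ^ 2 ≤ (x - y) * (ψ x - ψ y) ∧ (x - y) * (ψ x - ψ y) ≤ l * (x - y) ^ 2)
    (x y : ℝ) : 0 ≤ (ψ x - ψ y - μ * (x - y)) * (Λ * (x - y) - (ψ x - ψ y)) := by
  rcases eq_or_ne x y with rfl | hxy
  · simp
  obtain ⟨hlow, hupp⟩ := hψ x y
  have hsq : 0 < (x - y) ^ 2 := by positivity [sub_ne_zero.mpr hxy]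
  refine (mul_nonneg_iff_of_pos_right hsq).mp ?_
  have hlow' : 0 ≤ (x - y) * (ψ x - ψ y) - μ * (x - y) ^ 2 := by nlinarith
  have hupp' : 0 ≤ Λ * (x - y) ^ 2 - (x - y) * (ψ x - ψ y) := by nlinarith
  nlinarith [mul_nonneg hlow' hupp']

lemma EuclideanSpace.inner_nonneg_of_forall {ι : Type*} [Fintype ι] {v w : EuclideanSpace ℝ ι}
    (h : ∀ i, 0 ≤ v i * w i) : 0 ≤ ⟪v, w⟫ := by
  rw [PiLp.inner_apply]
  exact Finset.sum_nonneg fun i _ => by simpa [mul_comm] using h i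

lemma MeasureTheory.L2.inner_nonneg_of_ae {α E : Type*} [MeasurableSpace α] {ν : Measure α}
    [NormedAddCommGroup E] [InnerProductSpace ℝ E] {f g : Lp E 2 ν}
    (h : ∀ᵐ t ∂ν, 0 ≤ ⟪f t, g t⟫) : 0 ≤ ⟪f, g⟫ := by
  rw [L2.inner_def]
  exact integral_nonneg_of_ae h

lemma inner_nonneg_of_diagonal_sector {α ι : Type*} [MeasurableSpace α] {ν : Measure α}
    [Fintype ι] {φ : ι → ℝ → ℝ} {m l : ι → ℝ} {μ Λ : ℝ} (hμ : ∀ i, μ ≤ m i) (hΛ : ∀ i, l i ≤ Λ)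
    (hsec : ∀ i, ∀ x y : ℝ,
      m i * (x - y) ^ 2 ≤ (x - y) * (φ i x - φ i y) ∧
      (x - y) * (φ i x - φ i y) ≤ l i * (x - y) ^ 2)
    {Φ : Lp (EuclideanSpace ℝ ι) 2 ν → Lp (EuclideanSpace ℝ ι) 2 ν}
    (hΦ : ∀ u, ∀ᵐ t ∂ν, (Φ u t : ι → ℝ) = fun i => φ i (u t i))
    (u₁ u₂ : Lp (EuclideanSpace ℝ ι) 2 ν) :
    0 ≤ ⟪Φ u₁ - Φ u₂ - μ • (u₁ - u₂), Λ • (u₁ - u₂) - (Φ u₁ - Φ u₂)⟫ := by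
  refine L2.inner_nonneg_of_ae ?_
  filter_upwards [hΦ u₁, hΦ u₂, Lp.coeFn_sub (Φ u₁ - Φ u₂) (μ • (u₁ - u₂)),
    Lp.coeFn_sub (Λ • (u₁ - u₂)) (Φ u₁ - Φ u₂), Lp.coeFn_sub (Φ u₁) (Φ u₂),
    Lp.coeFn_smul μ (u₁ - u₂), Lp.coeFn_smul Λ (u₁ - u₂), Lp.coeFn_sub u₁ u₂]
    with t h₁ h₂ h₃ h₄ h₅ h₆ h₇ h₈
  refine EuclideanSpace.inner_nonneg_of_forall fun i => ?_
  simp only [h₃, h₄, h₅, h₆, h₇, h₈, Pi.sub_apply, Pi.smul_apply, PiLp.sub_apply, PiLp.smul_apply,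
    smul_eq_mul, congrFun h₁ i, congrFun h₂ i]
  exact sector_mul_nonneg (hμ i) (hΛ i) (hsec i) _ _

theorem stmt18_general (d : ℕ) (hd : 1 ≤ d) (φ : Fin d → ℝ → ℝ) (m l : Fin d → ℝ)
    (hsec : ∀ i, ∀ x y : ℝ,
      m i * (x - y) ^ 2 ≤ (x - y) * (φ i x - φ i y) ∧
      (x - y) * (φ i x - φ i y) ≤ l i * (x - y) ^ 2)
    (Φ : L2S d → L2S d)
    (hΦ : ∀ u : L2S d, ∀ᵐ t ∂(MeasureTheory.volume.restrict (Set.Ici (0 : ℝ))),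
      (Φ u : ℝ → EuclideanSpace ℝ (Fin d)) t =
        fun i => φ i ((u : ℝ → EuclideanSpace ℝ (Fin d)) t i)) :
    SRG Φ (Set.univ : Set (L2S d)) ⊆
      { z : ℂ | ‖z - (((sSup (Set.range l) + sInf (Set.range m)) / 2 : ℝ) : ℂ)‖ ≤
          (sSup (Set.range l) - sInf (Set.range m)) / 2 } := by
  have hl : ∀ i, l i ≤ sSup (Set.range l) := fun i =>
    le_csSup (Set.finite_range l).bddAbove ⟨i, rfl⟩
  have hm : ∀ i, sInf (Set.range m) ≤ m i := fun i =>
    csInf_le (Set.finite_range m).bddBelow ⟨i, rfl⟩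
  have hml : m ⟨0, hd⟩ ≤ l ⟨0, hd⟩ := by
    simpa using (hsec ⟨0, hd⟩ 1 0).1.trans (hsec ⟨0, hd⟩ 1 0).2
  intro z hz
  have hball := SRG_subset_closedBall ((hm _).trans (hml.trans (hl _)))
    (fun u₁ _ u₂ _ => inner_nonneg_of_diagonal_sector hm hl hsec hΦ u₁ u₂) hz
  rwa [mem_closedBall_iff_norm] at hball

/-- SRG of a diagonal static incrementally sector-bounded nonlinearity: let
`φ_i : ℝ → ℝ`, `φ_i(0) = 0`, satisfy the incremental sector bound `∂φ_i ∈ [μ_i, λ_i]`, and let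
`Φ : L₂^d → L₂^d` act diagonally and statically, `(Φu)(t) = (φ₁(u₁(t)),…,φ_d(u_d(t)))` (a.e.).
With `μ = min_i μ_i` and `λ = max_i λ_i`, the SRG of `Φ` (over all of `L₂^d`) is contained in
the disk `D_{[μ,λ]}` centered at `(λ+μ)/2` with radius `(λ−μ)/2`. -/
theorem stmt18 (d : ℕ) (hd : 1 ≤ d) (φ : Fin d → ℝ → ℝ) (m l : Fin d → ℝ)
    (hml : ∀ i, m i ≤ l i) (hφ0 : ∀ i, φ i 0 = 0)
    (hsec : ∀ i, ∀ x y : ℝ,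
      m i * (x - y) ^ 2 ≤ (x - y) * (φ i x - φ i y) ∧
      (x - y) * (φ i x - φ i y) ≤ l i * (x - y) ^ 2)
    (Φ : L2S d → L2S d)
    (hΦ : ∀ u : L2S d, ∀ᵐ t ∂(MeasureTheory.volume.restrict (Set.Ici (0 : ℝ))),
      (Φ u : ℝ → EuclideanSpace ℝ (Fin d)) t =
        fun i => φ i ((u : ℝ → EuclideanSpace ℝ (Fin d)) t i)) :
    SRG Φ (Set.univ : Set (L2S d)) ⊆
      { z : ℂ | ‖z - (((sSup (Set.range l) + sInf (Set.range m)) / 2 : ℝ) : ℂ)‖ ≤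
          (sSup (Set.range l) - sInf (Set.range m)) / 2 } :=
  stmt18_general d hd φ m l hsec Φ hΦ
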